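/- arXiv:1812.11403 — 3 statements merged into one kernel-verified Lean document; each statement's English description precedes it below -/
import Mathlib

section
/- If the boundary condition g(t) = κ·(∂T/∂n)·(1/T) is prescribed at the wall along with the no-slip conditions U = U^wall with U^wall·n = 0, then the viscous boundary term Wᵀ(Σ_j C_{1j} ∂W/∂x_j) appearing in the entropy balance reduces to the prescribed heat entropy transfer: Wᵀ(C₁₁ ∂W/∂x₁ + C₁₂ ∂W/∂x₂ + C₁₃ ∂W/∂x₃) = κ (∂T/∂x₁)/T when U₁ = U₂ = U₃ = 0 at the wall. In particular the viscous contribution to the time derivative of total entropy is bounded by the data g(t). -/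
noncomputable section

open Matrix

/-- with the no-slip conditions `U₁ = U₂ = U₃ = 0` at the wall,
the viscous boundary term `Wᵀ F^{(V)}_{x₁} = Wᵀ(Σⱼ C_{1j} ∂W/∂xⱼ)` reduces to
the prescribed heat entropy transfer `κ (∂T/∂x₁)/T = g(t)`, so the viscous
contribution to the entropy rate is bounded by the data `g(t)`. -/
theorem viscous_wall_term_is_heat_entropy_transfer
    (T κ Tx1 : ℝ) (hT : 0 < T) (hκ : 0 ≤ κ)
    (U : Fin 3 → ℝ) (τ : Fin 3 → ℝ)  -- τ i = τ_{(i+1),1}, wall-normal viscous stresses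
    (w1 : ℝ)                          -- first entropy variable (irrelevant here)
    (w : Fin 5 → ℝ)
    (hw : w = ![w1, U 0 / T, U 1 / T, U 2 / T, -1 / T])
    (FV : Fin 5 → ℝ)
    (hFV : FV = ![0, τ 0, τ 1, τ 2, (∑ i, τ i * U i) - κ * Tx1])
    (g : ℝ) (hg : g = κ * Tx1 * (1 / T))
    (hnoslip : ∀ i, U i = 0) :
    w ⬝ᵥ FV = g := by
  subst hw hFV hg
  simp [dotProduct, Fin.sum_univ_succ, hnoslip]
  field_simp
end
end

section
/- Godunov's theorem: if a system of conservation laws ∂Q/∂t + Σ_m ∂F_m/∂x_m = 0 can be symmetrized by new variables W (i.e., Q = Q(W) with ∂Q/∂W symmetric positive definite and ∂F_m/∂W symmetric), and there exists a scalar potential Φ(W) with Qᵀ = ∂Φ/∂W and potentials Ψ_m with F_mᵀ = ∂Ψ_m/∂W, then S(Q) := WᵀQ − Φ is an entropy function with entropy fluxes F̂_m := WᵀF_m − Ψ_m, i.e., ∂S/∂Q = Wᵀ and ∂F̂_m/∂Q = Wᵀ ∂F_m/∂Q. -/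
/-! By the product rule, `D(v ⬝ᵥ G v)(w) h = h ⬝ᵥ G w + w ⬝ᵥ DG(w) h`; when `G` is the gradient of
`P`, the first term is exactly `DP(w) h` and cancels, leaving `w ⬝ᵥ DG(w) h`. -/

section DotProduct

variable {ι E : Type*} [Fintype ι] [NormedAddCommGroup E] [NormedSpace ℝ E]
  {f g : E → ι → ℝ} {x : E}

variable (ι) in
noncomputable def dotProductCLM : (ι → ℝ) →L[ℝ] (ι → ℝ) →L[ℝ] ℝ :=
  (dotProductBilin ℝ ℝ).toContinuousBilinearMap

@[simp]
theorem dotProductCLM_apply (v w : ι → ℝ) : dotProductCLM ι v w = v ⬝ᵥ w := rfl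

theorem HasFDerivAt.dotProduct {f' g' : E →L[ℝ] ι → ℝ} (hf : HasFDerivAt f f' x)
    (hg : HasFDerivAt g g' x) :
    HasFDerivAt (fun y => f y ⬝ᵥ g y)
      ((dotProductCLM ι).precompR E (f x) g' + (dotProductCLM ι).precompL E f' (g x)) x :=
  (dotProductCLM ι).hasFDerivAt_of_bilinear hf hg

theorem DifferentiableAt.dotProduct (hf : DifferentiableAt ℝ f x) (hg : DifferentiableAt ℝ g x) :
    DifferentiableAt ℝ (fun y => f y ⬝ᵥ g y) x :=
  (hf.hasFDerivAt.dotProduct hg.hasFDerivAt).differentiableAt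

theorem fderiv_dotProduct_apply (hf : DifferentiableAt ℝ f x) (hg : DifferentiableAt ℝ g x)
    (h : E) :
    fderiv ℝ (fun y => f y ⬝ᵥ g y) x h = fderiv ℝ f x h ⬝ᵥ g x + f x ⬝ᵥ fderiv ℝ g x h := by
  rw [(hf.hasFDerivAt.dotProduct hg.hasFDerivAt).fderiv]
  simp [add_comm]

end DotProduct

theorem fderiv_dotProduct_sub_potential_apply {ι : Type*} [Fintype ι]
    {G : (ι → ℝ) → ι → ℝ} {P : (ι → ℝ) → ℝ} {w : ι → ℝ}
    (hG : DifferentiableAt ℝ G w) (hP : DifferentiableAt ℝ P w)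
    (hgrad : ∀ h, fderiv ℝ P w h = G w ⬝ᵥ h) (h : ι → ℝ) :
    fderiv ℝ (fun v => v ⬝ᵥ G v - P v) w h = w ⬝ᵥ fderiv ℝ G w h := by
  have hid : DifferentiableAt ℝ (fun v : ι → ℝ => v) w := differentiableAt_id
  rw [fderiv_fun_sub (hid.dotProduct hG) hP, _root_.sub_apply,
    fderiv_dotProduct_apply hid hG, fderiv_fun_id, ContinuousLinearMap.id_apply, hgrad,
    dotProduct_comm h]
  ring

theorem godunov_entropy_pair_general
    (Q : (Fin 5 → ℝ) → Fin 5 → ℝ)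
    (F : Fin 3 → (Fin 5 → ℝ) → Fin 5 → ℝ)
    (Φ : (Fin 5 → ℝ) → ℝ)
    (Ψ : Fin 3 → (Fin 5 → ℝ) → ℝ)
    (hQ : Differentiable ℝ Q)
    (hF : ∀ m, Differentiable ℝ (F m))
    (hΦ : Differentiable ℝ Φ)
    (hΨ : ∀ m, Differentiable ℝ (Ψ m))
    -- Qᵀ = ∂Φ/∂W  and  F_mᵀ = ∂Ψ_m/∂W
    (hgradΦ : ∀ w h, fderiv ℝ Φ w h = Q w ⬝ᵥ h)
    (hgradΨ : ∀ m w h, fderiv ℝ (Ψ m) w h = F m w ⬝ᵥ h) :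
    (∀ w h, fderiv ℝ (fun v => v ⬝ᵥ Q v - Φ v) w h = w ⬝ᵥ fderiv ℝ Q w h) ∧
    (∀ m w h, fderiv ℝ (fun v => v ⬝ᵥ F m v - Ψ m v) w h = w ⬝ᵥ fderiv ℝ (F m) w h) :=
  ⟨fun w => fderiv_dotProduct_sub_potential_apply (hQ w) (hΦ w) (hgradΦ w),
    fun m w => fderiv_dotProduct_sub_potential_apply (hF m w) (hΨ m w) (hgradΨ m w)⟩

/-- Godunov's theorem: if a system of conservation laws is
symmetrized by variables `W` (Jacobian `∂Q/∂W` symmetric positive definite,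
`∂F_m/∂W` symmetric) and there are potentials `Φ`, `Ψ_m` with `Qᵀ = ∂Φ/∂W`,
`F_mᵀ = ∂Ψ_m/∂W`, then `S := WᵀQ - Φ` is an entropy function with entropy
fluxes `F̂_m := WᵀF_m - Ψ_m`; in `W`-coordinates this means
`DS(w) = wᵀ DQ(w)` (i.e. `∂S/∂Q = Wᵀ`) and `DF̂_m(w) = wᵀ DF_m(w)`
(i.e. `∂F̂_m/∂Q = Wᵀ ∂F_m/∂Q`). -/
theorem godunov_entropy_pair
    (Q : (Fin 5 → ℝ) → Fin 5 → ℝ)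
    (F : Fin 3 → (Fin 5 → ℝ) → Fin 5 → ℝ)
    (Φ : (Fin 5 → ℝ) → ℝ)
    (Ψ : Fin 3 → (Fin 5 → ℝ) → ℝ)
    (hQ : Differentiable ℝ Q)
    (hF : ∀ m, Differentiable ℝ (F m))
    (hΦ : Differentiable ℝ Φ)
    (hΨ : ∀ m, Differentiable ℝ (Ψ m))
    -- Jacobian ∂Q/∂W symmetric positive definite
    (hQsymm : ∀ w h k, h ⬝ᵥ fderiv ℝ Q w k = k ⬝ᵥ fderiv ℝ Q w h)
    (hQpos : ∀ w h, h ≠ 0 → 0 < h ⬝ᵥ fderiv ℝ Q w h)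
    -- Jacobians ∂F_m/∂W symmetric
    (hFsymm : ∀ m w h k, h ⬝ᵥ fderiv ℝ (F m) w k = k ⬝ᵥ fderiv ℝ (F m) w h)
    -- Qᵀ = ∂Φ/∂W  and  F_mᵀ = ∂Ψ_m/∂W
    (hgradΦ : ∀ w h, fderiv ℝ Φ w h = Q w ⬝ᵥ h)
    (hgradΨ : ∀ m w h, fderiv ℝ (Ψ m) w h = F m w ⬝ᵥ h) :
    (∀ w h, fderiv ℝ (fun v => v ⬝ᵥ Q v - Φ v) w h = w ⬝ᵥ fderiv ℝ Q w h) ∧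
    (∀ m w h, fderiv ℝ (fun v => v ⬝ᵥ F m v - Ψ m v) w h = w ⬝ᵥ fderiv ℝ (F m) w h) :=
  godunov_entropy_pair_general Q F Φ Ψ hQ hF hΦ hΨ hgradΦ hgradΨ
end

section
/- Entropy dissipativity of the interior-penalty term (Theorem: ns-viscous-ip-dissipation): let w and w^{(B,V)} be the entropy variables of the states v = (ρ, U₁, U₂, U₃, T) and v^{(B,V)} = (ρ, −U₁, −U₂ + 2U₂^wall, −U₃ + 2U₃^wall, T), and let L = −β(C₁₁ + C₁₁^{(B,V)})/2 with β > 0 and C₁₁, C₁₁^{(B,V)} the positive semi-definite viscous coefficient matrices evaluated at v and v^{(B,V)}. Then wᵀ L (w − w^{(B,V)}) = −(2βμ)/(3T)·(4U₁² + 3(U₂ − U₂^wall)² + 3(U₃ − U₃^wall)²) ≤ 0. -/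
noncomputable section

open Matrix

namespace Stmt11

/-- The normal viscous coefficient matrix `C₁₁` of the compressible
Navier–Stokes equations in entropy variables, evaluated at a state with
temperature `T` and velocity `u`. -/
def C11 (μ κ T : ℝ) (u : Fin 3 → ℝ) : Matrix (Fin 5) (Fin 5) ℝ :=
  !![0, 0, 0, 0, 0;
     0, 4/3 * μ * T, 0, 0, 4/3 * μ * T * u 0;
     0, 0, μ * T, 0, μ * T * u 1;
     0, 0, 0, μ * T, μ * T * u 2;
     0, 4/3 * μ * T * u 0, μ * T * u 1, μ * T * u 2,
       μ * T * (4/3 * (u 0) ^ 2 + (u 1) ^ 2 + (u 2) ^ 2) + κ * T ^ 2]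

/-- entropy dissipativity of the interior-penalty term:
with `w`, `w^{(B,V)}` the entropy variables of `v = (ρ,U₁,U₂,U₃,T)` and of the
mirror state `v^{(B,V)} = (ρ,-U₁,-U₂+2U₂ʷ,-U₃+2U₃ʷ,T)`, and
`L = -β (C₁₁ + C₁₁^{(B,V)})/2`, one has
`wᵀ L (w - w^{(B,V)}) = -(2βμ)/(3T) (4U₁² + 3(U₂-U₂ʷ)² + 3(U₃-U₃ʷ)²) ≤ 0`. -/
theorem interior_penalty_dissipative
    (μ κ T β w1 w1B : ℝ) (hμ : 0 < μ) (hκ : 0 ≤ κ) (hT : 0 < T) (hβ : 0 < β)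
    (U Uwall : Fin 3 → ℝ) (UB : Fin 3 → ℝ)
    (hUB : UB = ![-U 0, -U 1 + 2 * Uwall 1, -U 2 + 2 * Uwall 2])
    (w wB : Fin 5 → ℝ)
    (hw : w = ![w1, U 0 / T, U 1 / T, U 2 / T, -1 / T])
    (hwB : wB = ![w1B, UB 0 / T, UB 1 / T, UB 2 / T, -1 / T])
    (L : Matrix (Fin 5) (Fin 5) ℝ)
    (hL : L = (-(β / 2)) • (C11 μ κ T U + C11 μ κ T UB)) :
    w ⬝ᵥ L.mulVec (w - wB) =
      -(2 * β * μ) / (3 * T) *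
        (4 * (U 0) ^ 2 + 3 * (U 1 - Uwall 1) ^ 2 + 3 * (U 2 - Uwall 2) ^ 2) ∧
    w ⬝ᵥ L.mulVec (w - wB) ≤ 0 := by
  subst hUB hw hwB hL
  have hT' : T ≠ 0 := ne_of_gt hT
  have key : (![w1, U 0 / T, U 1 / T, U 2 / T, -1 / T] : Fin 5 → ℝ) ⬝ᵥ
      ((-(β / 2)) • (C11 μ κ T U + C11 μ κ T ![-U 0, -U 1 + 2 * Uwall 1, -U 2 + 2 * Uwall 2])).mulVec
        (![w1, U 0 / T, U 1 / T, U 2 / T, -1 / T] -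
          ![w1B, (![-U 0, -U 1 + 2 * Uwall 1, -U 2 + 2 * Uwall 2] : Fin 3 → ℝ) 0 / T,
            (![-U 0, -U 1 + 2 * Uwall 1, -U 2 + 2 * Uwall 2] : Fin 3 → ℝ) 1 / T,
            (![-U 0, -U 1 + 2 * Uwall 1, -U 2 + 2 * Uwall 2] : Fin 3 → ℝ) 2 / T, -1 / T]) =
      -(2 * β * μ) / (3 * T) *
        (4 * (U 0) ^ 2 + 3 * (U 1 - Uwall 1) ^ 2 + 3 * (U 2 - Uwall 2) ^ 2) := by
    simp [C11, Matrix.mulVec, dotProduct, Fin.sum_univ_five, Matrix.vecHead, Matrix.vecTail]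
    field_simp
    ring
  refine ⟨key, key ▸ ?_⟩
  have h1 : 0 ≤ 4 * (U 0) ^ 2 + 3 * (U 1 - Uwall 1) ^ 2 + 3 * (U 2 - Uwall 2) ^ 2 := by positivity
  have h2 : -(2 * β * μ) / (3 * T) ≤ 0 := by
    apply div_nonpos_of_nonpos_of_nonneg
    · nlinarith
    · nlinarith
  exact mul_nonpos_of_nonpos_of_nonneg h2 h1


end Stmt11
end
end
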